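/- arXiv:2505.21763 — 4 statements merged into one kernel-verified Lean document; each statement's English description precedes it below -/
import Mathlib

section
/- If G is a torsion-free group containing a central subgroup A isomorphic to Z^n such that the quotient G/A is finite, then G is free abelian of rank n, i.e., G is isomorphic to Z^n. -/
/-- A monoid is torsion-free if no nontrivial elements have finite order
(the definition `Monoid.IsTorsionFree` of the older Mathlib, since removed). -/
def Monoid.IsTorsionFree (G : Type*) [Monoid G] : Prop :=
  ∀ g : G, g ≠ 1 → ¬IsOfFinOrder g

open scoped commutatorElement

lemma aux_comm_left (G : Type*) [Group G] {z : G} (hz : z ∈ Subgroup.center G) (a c : G) :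
    ⁅a * z, c⁆ = ⁅a, c⁆ := by
  have h : z * c * z⁻¹ = c := by
    rw [← Subgroup.mem_center_iff.mp hz c, mul_inv_cancel_right]
  calc ⁅a * z, c⁆ = a * (z * c * z⁻¹) * a⁻¹ * c⁻¹ := by
        simp [commutatorElement_def, mul_assoc]
    _ = ⁅a, c⁆ := by rw [h]; simp [commutatorElement_def, mul_assoc]

lemma aux_finite_commutatorSet (G : Type*) [Group G]
    [Subgroup.FiniteIndex (Subgroup.center G)] : Finite (commutatorSet G) := by
  haveI : Finite (G ⧸ Subgroup.center G) :=
    Subgroup.finite_quotient_of_finiteIndex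
  refine Finite.of_surjective
    (fun p : (G ⧸ Subgroup.center G) × (G ⧸ Subgroup.center G) =>
      (⟨⁅p.1.out, p.2.out⁆, ⟨p.1.out, p.2.out, rfl⟩⟩ : commutatorSet G)) ?_
  rintro ⟨c, g₁, g₂, rfl⟩
  refine ⟨(QuotientGroup.mk g₁, QuotientGroup.mk g₂), ?_⟩
  ext
  have h₁ : g₁⁻¹ * (QuotientGroup.mk g₁ : G ⧸ Subgroup.center G).out ∈ Subgroup.center G := by
    rw [← QuotientGroup.eq]
    exact (QuotientGroup.out_eq' _).symm
  have h₂ : g₂⁻¹ * (QuotientGroup.mk g₂ : G ⧸ Subgroup.center G).out ∈ Subgroup.center G := by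
    rw [← QuotientGroup.eq]
    exact (QuotientGroup.out_eq' _).symm
  have e₁ : (QuotientGroup.mk g₁ : G ⧸ Subgroup.center G).out
      = g₁ * (g₁⁻¹ * (QuotientGroup.mk g₁ : G ⧸ Subgroup.center G).out) := by group
  have e₂ : (QuotientGroup.mk g₂ : G ⧸ Subgroup.center G).out
      = g₂ * (g₂⁻¹ * (QuotientGroup.mk g₂ : G ⧸ Subgroup.center G).out) := by group
  show ⁅_, _⁆ = ⁅g₁, g₂⁆
  rw [e₁, e₂, aux_comm_left _ h₁]
  rw [← commutatorElement_inv, aux_comm_left _ h₂, commutatorElement_inv]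

/-- A torsion-free group with a central subgroup isomorphic to `ℤ^n` of finite
index is itself free abelian of rank `n`. -/
theorem torsionFree_central_finiteIndex_zn (G : Type*) [Group G] (n : ℕ)
    (htf : Monoid.IsTorsionFree G)
    (A : Subgroup G) (hA : A ≤ Subgroup.center G)
    (hiso : Nonempty (A ≃* Multiplicative (Fin n → ℤ)))
    (hfi : A.FiniteIndex) :
    Nonempty (G ≃* Multiplicative (Fin n → ℤ)) := by
  classical
  obtain ⟨e⟩ := hiso
  haveI : A.FiniteIndex := hfi
  haveI hZfi : (Subgroup.center G).FiniteIndex := Subgroup.finiteIndex_of_le hA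
  -- Step 1: G is abelian (Schur + torsion-free)
  haveI : Finite (commutatorSet G) := aux_finite_commutatorSet G
  haveI hcfin : Finite (commutator G) := inferInstance
  have hcomm : ∀ a b : G, a * b = b * a := by
    intro a b
    have hmem : ⁅b, a⁆ ∈ commutator G :=
      Subgroup.commutator_mem_commutator (Subgroup.mem_top b) (Subgroup.mem_top a)
    have h1 : ⁅b, a⁆ = 1 := by
      by_contra h
      refine htf _ h ?_
      have hfo := isOfFinOrder_of_finite (⟨⁅b, a⁆, hmem⟩ : (commutator G))
      exact Submonoid.isOfFinOrder_coe.mpr hfo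
    have := commutatorElement_eq_one_iff_mul_comm.mp h1
    exact this.symm
  letI : CommGroup G := { (inferInstance : Group G) with mul_comm := hcomm }
  -- A is normal (it is central)
  haveI : A.Normal := ⟨fun a ha g => by
    rw [Subgroup.mem_center_iff.mp (hA ha) g, mul_inv_cancel_right]; exact ha⟩
  have hk : A.index ≠ 0 := hfi.index_ne_zero
  -- the power map into A
  let φ : G →* A :=
    { toFun := fun g => ⟨g ^ A.index, A.pow_index_mem g⟩
      map_one' := by ext; simp
      map_mul' := fun x y => by ext; simp [mul_pow] }
  have hφ : Function.Injective φ := by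
    refine (injective_iff_map_eq_one φ).mpr fun g hg => ?_
    by_contra hg1
    refine htf g hg1 (isOfFinOrder_iff_pow_eq_one.mpr ⟨A.index, Nat.pos_of_ne_zero hk, ?_⟩)
    exact congrArg Subtype.val hg
  -- injective additive homs in both directions
  let ψ : Additive G →+ (Fin n → ℤ) := MonoidHom.toAdditiveLeft (e.toMonoidHom.comp φ)
  have hψ : Function.Injective ψ := e.injective.comp hφ
  let χ : (Fin n → ℤ) →+ Additive G :=
    MonoidHom.toAdditiveRight (A.subtype.comp e.symm.toMonoidHom)
  have hχ : Function.Injective χ := A.subtype_injective.comp e.symm.injective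
  -- module structure facts
  have htf' : IsAddTorsionFree (Additive G) := isAddTorsionFree_iff_not_isOfFinAddOrder.mpr fun g hg hfo =>
    htf (Additive.toMul g) hg (isOfFinAddOrder_ofMul_iff.mp hfo)
  haveI : IsAddTorsionFree (Additive G) := htf'
  haveI : Module.Finite ℤ (Additive G) :=
    Module.Finite.of_injective ψ.toIntLinearMap hψ
  haveI : Module.Free ℤ (Additive G) := Module.free_of_finite_type_torsion_free'
  -- compute the rank
  have hrank : Module.finrank ℤ (Additive G) = n := by
    have h1 : Module.finrank ℤ (Additive G) ≤ Module.finrank ℤ (Fin n → ℤ) :=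
      LinearMap.finrank_le_finrank_of_injective (f := ψ.toIntLinearMap) hψ
    have h2 : Module.finrank ℤ (Fin n → ℤ) ≤ Module.finrank ℤ (Additive G) :=
      LinearMap.finrank_le_finrank_of_injective (f := χ.toIntLinearMap) hχ
    have hn : Module.finrank ℤ (Fin n → ℤ) = n := by simp [Module.finrank_pi]
    omega
  -- build the isomorphism
  let b := Module.Free.chooseBasis ℤ (Additive G)
  have hcard := (Module.finrank_eq_card_chooseBasisIndex ℤ (Additive G)).symm.trans hrank
  let eι : Module.Free.ChooseBasisIndex ℤ (Additive G) ≃ Fin n :=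
    Fintype.equivFinOfCardEq hcard
  let e2 : Additive G ≃ₗ[ℤ] (Fin n → ℤ) :=
    b.equivFun.trans (LinearEquiv.funCongrLeft ℤ ℤ eι.symm)
  exact ⟨AddEquiv.toMultiplicativeRight e2.toAddEquiv⟩
end

section
/- Let G be a group with a central subgroup A isomorphic to Z^n such that G/A is finite. Then A intersects the commutator subgroup of G trivially; equivalently, the natural map from A to the abelianization G/[G,G] is injective. -/
open scoped commutatorElement

lemma commutatorElement_eq_of_center {G : Type*} [Group G] (g h z w : G)
    (hz : z ∈ Subgroup.center G) (hw : w ∈ Subgroup.center G) :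
    ⁅g * z, h * w⁆ = ⁅g, h⁆ := by
  have hz' : ∀ x : G, z * x = x * z := fun x => (Subgroup.mem_center_iff.mp hz x).symm
  have hw' : ∀ x : G, w * x = x * w := fun x => (Subgroup.mem_center_iff.mp hw x).symm
  simp only [commutatorElement_def, mul_inv_rev]
  calc g * z * (h * w) * (z⁻¹ * g⁻¹) * (w⁻¹ * h⁻¹)
      = g * (z * (h * w * z⁻¹)) * g⁻¹ * (w⁻¹ * h⁻¹) := by group
    _ = g * ((h * w * z⁻¹) * z) * g⁻¹ * (w⁻¹ * h⁻¹) := by rw [hz']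
    _ = g * h * (w * (g⁻¹ * w⁻¹)) * h⁻¹ := by group
    _ = g * h * ((g⁻¹ * w⁻¹) * w) * h⁻¹ := by rw [hw']
    _ = g * h * g⁻¹ * h⁻¹ := by group

lemma finite_commutatorSet_of_finiteIndex_center {G : Type*} [Group G]
    (h : (Subgroup.center G).FiniteIndex) : Finite (commutatorSet G) := by
  haveI : Finite (G ⧸ Subgroup.center G) := Subgroup.finite_quotient_of_finiteIndex
  have hsub : commutatorSet G ⊆
      Set.range (fun p : (G ⧸ Subgroup.center G) × (G ⧸ Subgroup.center G) =>
        ⁅p.1.out, p.2.out⁆) := by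
    rintro x ⟨g, h, rfl⟩
    refine ⟨(QuotientGroup.mk g, QuotientGroup.mk h), ?_⟩
    have hg : ((QuotientGroup.mk g : G ⧸ Subgroup.center G).out)⁻¹ * g ∈ Subgroup.center G := by
      rw [← QuotientGroup.eq]; exact QuotientGroup.out_eq' _
    have hh : ((QuotientGroup.mk h : G ⧸ Subgroup.center G).out)⁻¹ * h ∈ Subgroup.center G := by
      rw [← QuotientGroup.eq]; exact QuotientGroup.out_eq' _
    have hg' : g = (QuotientGroup.mk g : G ⧸ Subgroup.center G).out *
        (((QuotientGroup.mk g : G ⧸ Subgroup.center G).out)⁻¹ * g) := by group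
    have hh' : h = (QuotientGroup.mk h : G ⧸ Subgroup.center G).out *
        (((QuotientGroup.mk h : G ⧸ Subgroup.center G).out)⁻¹ * h) := by group
    show ⁅(QuotientGroup.mk g : G ⧸ Subgroup.center G).out,
        (QuotientGroup.mk h : G ⧸ Subgroup.center G).out⁆ = ⁅g, h⁆
    conv_rhs => rw [hg', hh']
    exact (commutatorElement_eq_of_center _ _ _ _ hg hh).symm
  exact Set.Finite.subset (Set.finite_range _) hsub

/-- If `A ≤ Z(G)` is central with `A ≅ ℤ^n` and `[G : A]` finite, then `A`
meets the commutator subgroup trivially. -/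
theorem central_zn_meets_commutator_trivially (G : Type*) [Group G] (n : ℕ)
    (A : Subgroup G) (hA : A ≤ Subgroup.center G)
    (hiso : Nonempty (A ≃* Multiplicative (Fin n → ℤ)))
    (hfi : A.FiniteIndex) :
    ∀ a ∈ A, a ∈ commutator G → a = 1 := by
  intro a haA haC
  haveI : (Subgroup.center G).FiniteIndex := Subgroup.finiteIndex_of_le hA
  haveI : Finite (commutatorSet G) := finite_commutatorSet_of_finiteIndex_center this
  haveI : Finite (commutator G) := inferInstance
  obtain ⟨k, hk, hak⟩ := (isOfFinOrder_of_finite (⟨a, haC⟩ : commutator G)).exists_pow_eq_one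
  have hak' : a ^ k = 1 := by
    have := congrArg (Subtype.val) hak
    simpa using this
  obtain ⟨e⟩ := hiso
  have hxA : (⟨a, haA⟩ : A) ^ k = 1 := by
    ext; simpa using hak'
  have he : e ⟨a, haA⟩ = 1 := by
    have h1 : (e ⟨a, haA⟩) ^ k = 1 := by rw [← map_pow, hxA, map_one]
    have h2 : (k : ℤ) • (Multiplicative.toAdd (e ⟨a, haA⟩)) = 0 := by
      have := congrArg Multiplicative.toAdd h1
      simpa [toAdd_pow] using this
    have hk0 : (k : ℤ) ≠ 0 := by exact_mod_cast hk.ne'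
    rcases smul_eq_zero.mp h2 with h | h
    · exact absurd h hk0
    · exact toAdd_eq_zero.mp h
  have : (⟨a, haA⟩ : A) = 1 := by
    apply e.injective; rw [he, map_one]
  simpa using congrArg Subtype.val this
end

section
/- Let G be a group with a central subgroup A ≅ Z^n of finite index. Then the abelianization G/[G,G] is a finitely generated abelian group of rank exactly n (i.e., its torsion-free quotient is isomorphic to Z^n). -/
/-- If `G` has a central subgroup `A ≅ ℤ^n` of finite index, then the
abelianization of `G` is finitely generated of rank exactly `n`: its
quotient by its torsion subgroup is isomorphic to `ℤ^n`. -/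
theorem abelianization_rank_of_central_zn (G : Type*) [Group G] (n : ℕ)
    (A : Subgroup G) (hA : A ≤ Subgroup.center G)
    (hiso : Nonempty (A ≃* Multiplicative (Fin n → ℤ)))
    (hfi : A.FiniteIndex) :
    Group.FG (Abelianization G) ∧
      Nonempty ((Abelianization G ⧸ CommGroup.torsion (Abelianization G)) ≃*
        Multiplicative (Fin n → ℤ)) := by
  classical
  obtain ⟨e⟩ := hiso
  haveI : A.FiniteIndex := hfi
  haveI : A.Normal := by
    constructor
    intro a ha g
    have h : g * a * g⁻¹ = a := by
      rw [Subgroup.mem_center_iff.mp (hA ha) g, mul_inv_cancel_right]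
    rw [h]; exact ha
  set m := A.index with hm
  have hm0 : m ≠ 0 := hfi.index_ne_zero
  -- the transfer homomorphism
  let ϕ : A →* Multiplicative (Fin n → ℤ) := e.toMonoidHom
  let T : Abelianization G →* Multiplicative (Fin n → ℤ) :=
    Abelianization.lift (MonoidHom.transfer ϕ)
  let j : Multiplicative (Fin n → ℤ) →* Abelianization G :=
    (Abelianization.of.comp A.subtype).comp e.symm.toMonoidHom
  have hTj : ∀ z, T (j z) = z ^ m := by
    intro z
    set a : A := e.symm z with ha
    have key : ∀ (k : ℕ) (g₀ : G), g₀⁻¹ * (a : G) ^ k * g₀ ∈ A →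
        g₀⁻¹ * (a : G) ^ k * g₀ = (a : G) ^ k := by
      intro k g₀ _
      have hc : (a : G) ^ k ∈ Subgroup.center G := pow_mem (hA a.2) k
      rw [mul_assoc, ← Subgroup.mem_center_iff.mp hc g₀, inv_mul_cancel_left]
    have h1 : T (j z) = MonoidHom.transfer ϕ (a : G) := by
      simp [T, j, ha]
    rw [h1, MonoidHom.transfer_eq_pow ϕ (a : G) key]
    have h2 : (⟨(a : G) ^ m, MonoidHom.transfer_eq_pow_aux (a : G) key⟩ : A) = a ^ m := by
      ext; simp
    rw [h2, map_pow]
    simp [ϕ, ha]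
  have hjinj : Function.Injective j := by
    rw [injective_iff_map_eq_one]
    intro z hz
    have h1 : z ^ m = 1 := by rw [← hTj z, hz, map_one]
    have h2 : (m : ℤ) • z.toAdd = 0 := by
      have := congrArg Multiplicative.toAdd h1
      simpa [toAdd_pow, natCast_zsmul] using this
    rcases smul_eq_zero.mp h2 with h | h
    · exact absurd (by exact_mod_cast h) hm0
    · have : z.toAdd = 0 := h
      simpa using congrArg Multiplicative.ofAdd this
  -- the image of `j` has finite index in the abelianization
  set R := j.range with hR
  have hofR : ∀ a : G, a ∈ A → Abelianization.of a ∈ R := by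
    intro a ha
    refine ⟨e ⟨a, ha⟩, ?_⟩
    simp [j]
  have hfinR : Finite (Abelianization G ⧸ R) := by
    let q : G →* Abelianization G ⧸ R := (QuotientGroup.mk' R).comp Abelianization.of
    have hAq : A ≤ q.ker := by
      intro a ha
      simp only [q, MonoidHom.mem_ker, MonoidHom.comp_apply, QuotientGroup.mk'_apply]
      rw [QuotientGroup.eq_one_iff]
      exact hofR a ha
    have hsurj : Function.Surjective (QuotientGroup.lift A q hAq) := by
      intro y
      obtain ⟨x, rfl⟩ := QuotientGroup.mk'_surjective R y
      obtain ⟨g, rfl⟩ := Quotient.exists_rep x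
      exact ⟨QuotientGroup.mk g, rfl⟩
    exact Finite.of_surjective _ hsurj
  -- pass to additive world
  let M := Additive (Abelianization G)
  let jl : (Fin n → ℤ) →ₗ[ℤ] M := (MonoidHom.toAdditiveRight j).toIntLinearMap
  have hjl : ∀ v, jl v = Additive.ofMul (j (Multiplicative.ofAdd v)) := fun _ => rfl
  have hjlinj : Function.Injective jl := by
    intro a b hab
    have := hjinj (show j (Multiplicative.ofAdd a) = j (Multiplicative.ofAdd b) from hab)
    exact this
  set C := LinearMap.range jl with hC
  set c := Nat.card (Abelianization G ⧸ R) with hc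
  have hc0 : c ≠ 0 := Nat.card_pos.ne'
  have hcmem : ∀ x : M, (c : ℤ) • x ∈ C := by
    intro x
    have h1 : (x.toMul) ^ c ∈ R := by
      rw [← QuotientGroup.eq_one_iff (G := Abelianization G) (N := R)]
      rw [QuotientGroup.mk_pow]
      exact pow_card_eq_one'
    obtain ⟨z, hz⟩ := h1
    refine ⟨z.toAdd, ?_⟩
    rw [hjl]
    simp only [ofAdd_toAdd]
    rw [hz, ofMul_pow, natCast_zsmul]
    rfl
  -- finite generation
  haveI hMfin : Module.Finite ℤ M := by
    constructor
    apply Submodule.fg_of_fg_map_of_fg_inf_ker C.mkQ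
    · haveI : Finite (M ⧸ C) := by
        let f : Abelianization G → M ⧸ C := fun x => Submodule.Quotient.mk (Additive.ofMul x)
        have hresp : ∀ a b : Abelianization G,
            (QuotientGroup.leftRel R) a b → f a = f b := by
          intro a b hab
          rw [QuotientGroup.leftRel_apply] at hab
          obtain ⟨z, hz⟩ := hab
          have : Additive.ofMul b - Additive.ofMul a ∈ C := by
            refine ⟨z.toAdd, ?_⟩
            rw [hjl]
            simp only [ofAdd_toAdd]
            rw [hz, ofMul_mul, ofMul_inv, neg_add_eq_sub]
          exact (Submodule.Quotient.eq C).mpr (by simpa using neg_mem this)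
        have hsurj2 : Function.Surjective
            (fun y : Abelianization G ⧸ R => Quotient.liftOn' y f hresp) := by
          intro w
          obtain ⟨x, rfl⟩ := Submodule.Quotient.mk_surjective C w
          exact ⟨QuotientGroup.mk x.toMul, rfl⟩
        exact Finite.of_surjective _ hsurj2
      rw [Submodule.map_top, Submodule.range_mkQ]
      exact Module.Finite.fg_top
    · rw [Submodule.ker_mkQ, top_inf_eq]
      rw [hC, ← Submodule.map_top]
      exact Submodule.FG.map _ Module.Finite.fg_top
  have hFG : Group.FG (Abelianization G) := by
    rw [GroupFG.iff_add_fg]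
    exact Module.Finite.iff_addGroup_fg.mp hMfin
  refine ⟨hFG, ?_⟩
  -- torsion quotient
  set τ := Submodule.torsion ℤ M with hτ
  have hCtf : ∀ (k : ℤ) (y : M), k ≠ 0 → y ∈ C → k • y = 0 → y = 0 := by
    intro k y hk hy hky
    obtain ⟨z, rfl⟩ := hy
    have : jl (k • z) = 0 := by rw [map_smul]; exact hky
    have hz : k • z = 0 := hjlinj (by simpa using this)
    rcases smul_eq_zero.mp hz with h | h
    · exact absurd h hk
    · rw [h, map_zero]
  -- the map ν : M →ₗ ℤ^n with jl (ν x) = c • x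
  let eC : (Fin n → ℤ) ≃ₗ[ℤ] LinearMap.range jl := LinearEquiv.ofInjective jl hjlinj
  let ν : M →ₗ[ℤ] (Fin n → ℤ) :=
    eC.symm.toLinearMap ∘ₗ LinearMap.codRestrict C ((c : ℤ) • LinearMap.id) hcmem
  have hν : ∀ x : M, jl (ν x) = (c : ℤ) • x := by
    intro x
    have h1 : eC (ν x) = ⟨(c : ℤ) • x, hcmem x⟩ := by
      simp only [ν, LinearMap.comp_apply, LinearEquiv.coe_toLinearMap]
      rw [LinearEquiv.apply_symm_apply]
      rfl
    have h2 : ((eC (ν x) : LinearMap.range jl) : M) = jl (ν x) := rfl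
    rw [← h2, h1]
  have hkerν : ∀ x : M, ν x = 0 → x ∈ τ := by
    intro x hx
    have : (c : ℤ) • x = 0 := by rw [← hν x, hx, map_zero]
    exact ⟨⟨(c : ℤ), mem_nonZeroDivisors_of_ne_zero (by exact_mod_cast hc0)⟩, this⟩
  have hτν : τ ≤ LinearMap.ker ν := by
    rintro x ⟨⟨k, hk⟩, hkx⟩
    have hk0 : k ≠ 0 := nonZeroDivisors.ne_zero hk
    have h1 : k • jl (ν x) = 0 := by
      rw [hν x, smul_comm]
      rw [show k • x = 0 from hkx]
      simp
    have h2 : jl (ν x) = 0 :=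
      hCtf k (jl (ν x)) hk0 (LinearMap.mem_range_self jl (ν x)) h1
    have h3 : ν x = 0 := hjlinj (by simpa using h2)
    exact h3
  let νbar : (M ⧸ τ) →ₗ[ℤ] (Fin n → ℤ) := τ.liftQ ν hτν
  have hνbarinj : Function.Injective νbar := by
    rw [← LinearMap.ker_eq_bot]
    apply Submodule.ker_liftQ_eq_bot
    intro x hx
    exact hkerν x hx
  let fbar : (Fin n → ℤ) →ₗ[ℤ] (M ⧸ τ) := τ.mkQ ∘ₗ jl
  have hfbarinj : Function.Injective fbar := by
    rw [← LinearMap.ker_eq_bot]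
    rw [Submodule.eq_bot_iff]
    intro v hv
    have h1 : jl v ∈ τ := by
      simpa [fbar, Submodule.Quotient.mk_eq_zero] using hv
    obtain ⟨⟨k, hk⟩, hkx⟩ := h1
    have : jl v = 0 :=
      hCtf k (jl v) (nonZeroDivisors.ne_zero hk) (LinearMap.mem_range_self jl v) hkx
    exact hjlinj (by simpa using this)
  haveI : Module.Finite ℤ (M ⧸ τ) := inferInstance
  haveI : NoZeroSMulDivisors ℤ (M ⧸ τ) :=
    Function.Injective.noZeroSMulDivisors νbar hνbarinj (map_zero νbar)
      (fun k x => map_smul νbar k x)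
  haveI : Module.Free ℤ (M ⧸ τ) := Module.free_of_finite_type_torsion_free'
  have hrank : Module.finrank ℤ (M ⧸ τ) = n := by
    have h1 : Module.finrank ℤ (M ⧸ τ) ≤ n := by
      have := LinearMap.finrank_le_finrank_of_injective hνbarinj
      simpa [Module.finrank_pi] using this
    have h2 : n ≤ Module.finrank ℤ (M ⧸ τ) := by
      have := LinearMap.finrank_le_finrank_of_injective hfbarinj
      simpa [Module.finrank_pi] using this
    omega
  let basis : Module.Basis (Fin n) ℤ (M ⧸ τ) := Module.finBasisOfFinrankEq ℤ (M ⧸ τ) hrank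
  let e2 : (M ⧸ τ) ≃ₗ[ℤ] (Fin n → ℤ) := basis.equivFun
  -- assemble the final isomorphism
  let F : Abelianization G →* Multiplicative (Fin n → ℤ) :=
    AddMonoidHom.toMultiplicativeRight ((e2.toLinearMap ∘ₗ τ.mkQ).toAddMonoidHom)
  have hFapp : ∀ x : Abelianization G,
      F x = Multiplicative.ofAdd (e2 (Submodule.Quotient.mk (Additive.ofMul x))) := fun _ => rfl
  have hFsurj : Function.Surjective F := by
    intro z
    obtain ⟨p, hp⟩ := e2.surjective z.toAdd
    obtain ⟨x, rfl⟩ := Submodule.Quotient.mk_surjective τ p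
    exact ⟨x.toMul, by rw [hFapp]; simp [hp]⟩
  have hFker : F.ker = CommGroup.torsion (Abelianization G) := by
    ext x
    rw [MonoidHom.mem_ker, CommGroup.mem_torsion, hFapp]
    constructor
    · intro h
      have h1 : e2 (Submodule.Quotient.mk (Additive.ofMul x)) = 0 := by
        simpa using congrArg Multiplicative.toAdd h
      have h2 : (Submodule.Quotient.mk (Additive.ofMul x) : M ⧸ τ) = 0 := by
        have := congrArg e2.symm h1
        simpa using this
      have h3 : Additive.ofMul x ∈ τ := (Submodule.Quotient.mk_eq_zero τ).mp h2
      obtain ⟨⟨k, hk⟩, hkx⟩ := h3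
      have hkx' : k • Additive.ofMul x = 0 := hkx
      rw [isOfFinOrder_iff_pow_eq_one]
      refine ⟨k.natAbs, Int.natAbs_pos.mpr (nonZeroDivisors.ne_zero hk), ?_⟩
      have h4 : (k.natAbs : ℤ) • Additive.ofMul x = 0 := by
        rcases Int.natAbs_eq k with h | h
        · rw [← h]; exact hkx'
        · have : ((k.natAbs : ℤ)) = -k := by omega
          rw [this, neg_smul, hkx', neg_zero]
      have h5 : Additive.ofMul (x ^ k.natAbs) = 0 := by
        rw [ofMul_pow]
        rw [← Nat.cast_smul_eq_nsmul ℤ]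
        exact h4
      simpa using congrArg Additive.toMul h5
    · intro h
      obtain ⟨k, hk, hxk⟩ := isOfFinOrder_iff_pow_eq_one.mp h
      have h1 : Additive.ofMul x ∈ τ := by
        refine ⟨⟨(k : ℤ), mem_nonZeroDivisors_of_ne_zero (by exact_mod_cast hk.ne')⟩, ?_⟩
        have h5 : Additive.ofMul (x ^ k) = 0 := by rw [hxk]; rfl
        rw [ofMul_pow] at h5
        show ((k : ℤ)) • Additive.ofMul x = 0
        rw [Nat.cast_smul_eq_nsmul ℤ]
        exact h5
      have h2 : (Submodule.Quotient.mk (Additive.ofMul x) : M ⧸ τ) = 0 :=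
        (Submodule.Quotient.mk_eq_zero τ).mpr h1
      rw [h2, map_zero]
      rfl
  exact ⟨(QuotientGroup.quotientMulEquivOfEq hFker.symm).trans
    (QuotientGroup.quotientKerEquivOfSurjective F hFsurj)⟩
end

section
/- Let G be a finitely generated group with a central subgroup A ≅ Z^n of finite index, and suppose n equals the rank of the abelianization of G. If moreover G is torsion-free, then G ≅ Z^n; in particular G is abelian. -/
open scoped commutatorElement

private lemma central_commutator_aux {G : Type*} [Group G] (a b z w : G)
    (hz : z ∈ Subgroup.center G) (hw : w ∈ Subgroup.center G) :
    ⁅a * z, b * w⁆ = ⁅a, b⁆ := by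
  have hz' := Subgroup.mem_center_iff.mp hz
  have hw' := Subgroup.mem_center_iff.mp hw
  have hzi : ∀ g : G, g * z⁻¹ = z⁻¹ * g := fun g => (Commute.inv_right (a := g) (hz' g)).eq
  have hwi : ∀ g : G, g * w⁻¹ = w⁻¹ * g := fun g => (Commute.inv_right (a := g) (hw' g)).eq
  have step1 : ⁅a * z, b * w⁆ = ⁅a, b * w⁆ := by
    simp only [commutatorElement_def, mul_inv_rev]
    calc a * z * (b * w) * (z⁻¹ * a⁻¹) * (w⁻¹ * b⁻¹)
        = a * (z * ((b * w) * z⁻¹)) * a⁻¹ * (w⁻¹ * b⁻¹) := by group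
      _ = a * (z * (z⁻¹ * (b * w))) * a⁻¹ * (w⁻¹ * b⁻¹) := by rw [hzi (b * w)]
      _ = a * (b * w) * a⁻¹ * (w⁻¹ * b⁻¹) := by group
  have step2 : ⁅a, b * w⁆ = ⁅a, b⁆ := by
    simp only [commutatorElement_def, mul_inv_rev]
    calc a * (b * w) * a⁻¹ * (w⁻¹ * b⁻¹)
        = a * b * (w * (a⁻¹ * w⁻¹)) * b⁻¹ := by group
      _ = a * b * (w * (w⁻¹ * a⁻¹)) * b⁻¹ := by rw [hwi a⁻¹]
      _ = a * b * a⁻¹ * b⁻¹ := by group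
  rw [step1, step2]

private lemma finite_commutatorSet_of_center_finiteIndex {G : Type*} [Group G]
    [(Subgroup.center G).FiniteIndex] : Finite (commutatorSet G) := by
  have : Finite (G ⧸ Subgroup.center G) := inferInstance
  refine Finite.of_surjective
    (fun p : (G ⧸ Subgroup.center G) × (G ⧸ Subgroup.center G) =>
      (⟨⁅p.1.out, p.2.out⁆, ⟨p.1.out, p.2.out, rfl⟩⟩ : commutatorSet G)) ?_
  rintro ⟨g, g₁, g₂, rfl⟩
  refine ⟨(QuotientGroup.mk g₁, QuotientGroup.mk g₂), ?_⟩
  ext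
  show ⁅(QuotientGroup.mk g₁ : G ⧸ Subgroup.center G).out,
        (QuotientGroup.mk g₂ : G ⧸ Subgroup.center G).out⁆ = ⁅g₁, g₂⁆
  have h1 : g₁⁻¹ * (QuotientGroup.mk g₁ : G ⧸ Subgroup.center G).out ∈ Subgroup.center G := by
    rw [← QuotientGroup.eq]
    exact (QuotientGroup.out_eq' _).symm
  have h2 : g₂⁻¹ * (QuotientGroup.mk g₂ : G ⧸ Subgroup.center G).out ∈ Subgroup.center G := by
    rw [← QuotientGroup.eq]
    exact (QuotientGroup.out_eq' _).symm
  have e1 : (QuotientGroup.mk g₁ : G ⧸ Subgroup.center G).out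
      = g₁ * (g₁⁻¹ * (QuotientGroup.mk g₁ : G ⧸ Subgroup.center G).out) := by group
  have e2 : (QuotientGroup.mk g₂ : G ⧸ Subgroup.center G).out
      = g₂ * (g₂⁻¹ * (QuotientGroup.mk g₂ : G ⧸ Subgroup.center G).out) := by group
  rw [e1, e2, central_commutator_aux _ _ _ _ h1 h2]

/-- Bochner-type rigidity: a finitely generated torsion-free group with a
central finite-index subgroup `A ≅ ℤ^n`, whose abelianization has rank
exactly `n`, is isomorphic to `ℤ^n`. -/
theorem torsionFree_central_zn_rank_eq (G : Type*) [Group G] (n : ℕ)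
    (hfg : Group.FG G) (htf : Monoid.IsTorsionFree G)
    (A : Subgroup G) (hA : A ≤ Subgroup.center G)
    (hiso : Nonempty (A ≃* Multiplicative (Fin n → ℤ)))
    (hfi : A.FiniteIndex)
    (hrank : Nonempty ((Abelianization G ⧸ CommGroup.torsion (Abelianization G)) ≃*
      Multiplicative (Fin n → ℤ))) :
    Nonempty (G ≃* Multiplicative (Fin n → ℤ)) := by
  haveI : (Subgroup.center G).FiniteIndex := Subgroup.finiteIndex_of_le hA
  haveI : Finite (commutatorSet G) := finite_commutatorSet_of_center_finiteIndex
  haveI : Finite (_root_.commutator G) := inferInstance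
  -- commutator subgroup is trivial since G is torsion-free
  have hcomm_bot : _root_.commutator G = ⊥ := by
    rw [Subgroup.eq_bot_iff_forall]
    intro x hx
    by_contra hne
    exact htf x hne
      ((_root_.commutator G).subtype.isOfFinOrder
        (isTorsion_of_finite (⟨x, hx⟩ : _root_.commutator G)))
  -- hence G is commutative
  have hmc : ∀ a b : G, a * b = b * a := by
    intro a b
    have := (Subgroup.commutator_eq_bot_iff_le_centralizer.mp hcomm_bot)
      (Subgroup.mem_top a)
    have := Subgroup.mem_centralizer_iff.mp this b (Subgroup.mem_top b)
    exact this.symm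
  letI : CommGroup G := { ‹Group G› with mul_comm := hmc }
  obtain ⟨e⟩ := hrank
  -- torsion of the abelianization is trivial
  have e0 : G ≃* Abelianization G := Abelianization.equivOfComm
  have htfA : Monoid.IsTorsionFree (Abelianization G) := by
    intro g hg hfin
    exact htf (e0.symm g) (fun h => hg (by simpa using congrArg e0 h))
      (e0.symm.toMonoidHom.isOfFinOrder hfin)
  have htor : CommGroup.torsion (Abelianization G) = ⊥ :=
    (Subgroup.eq_bot_iff_forall _).mpr fun g hg => by_contra fun h => htfA g h hg
  exact ⟨e0.trans ((QuotientGroup.quotientBot (G := Abelianization G)).symm.trans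
    ((QuotientGroup.quotientMulEquivOfEq htor.symm).trans e))⟩
end
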